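/- arXiv:1210.7119 — 4 statements merged into one kernel-verified Lean document; each statement's English description precedes it below -/
import Mathlib

section
/- Let w = w_1...w_m and v = v_1...v_m be reduced words such that for all i, either v_i = w_i or v_i = w_i − 1 (i.e., each entry is decremented at most once, as in a Little bump). Then for all i, v_i > v_{i+1} if and only if w_i > w_{i+1}; in particular v and w have the same descent set. -/
/-!
A reduced word never has two equal adjacent letters, since `s_a s_a = 1` would let the pair be
deleted. So `w_i ≠ w_{i+1}` and `v_i ≠ v_{i+1}`; and lowering two distinct naturals by at most one
each can only reverse their order by making them equal.
-/

/-- The adjacent transposition `sᵢ = (i, i+1)` acting on `ℕ` (positions `1, …, n` are used). -/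
def sgen (i : ℕ) : Equiv.Perm ℕ := Equiv.swap i (i + 1)

/-- The permutation represented by a word `w = w₁ w₂ … w_m`, namely `s_{w₁} s_{w₂} ⋯ s_{w_m}`. -/
def wordPerm (w : List ℕ) : Equiv.Perm ℕ := (w.map sgen).prod

/-- A word is reduced if it has minimal length among all words representing the same
permutation. -/
def IsReducedWord (w : List ℕ) : Prop :=
  ∀ v : List ℕ, wordPerm v = wordPerm w → w.length ≤ v.length

/-- `w` is a reduced word of the permutation `σ`. -/
def IsReducedWordOf (σ : Equiv.Perm ℕ) (w : List ℕ) : Prop :=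
  wordPerm w = σ ∧ IsReducedWord w

@[simp]
lemma wordPerm_append (l₁ l₂ : List ℕ) : wordPerm (l₁ ++ l₂) = wordPerm l₁ * wordPerm l₂ := by
  simp [wordPerm]

@[simp]
lemma wordPerm_cons_cons_self (a : ℕ) (l : List ℕ) : wordPerm (a :: a :: l) = wordPerm l := by
  simp [wordPerm, sgen, ← mul_assoc]

lemma not_isReducedWord_append_cons_cons_self (l₁ l₂ : List ℕ) (a : ℕ) :
    ¬ IsReducedWord (l₁ ++ a :: a :: l₂) := by
  intro hred
  have hle := hred (l₁ ++ l₂) (by simp)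
  simp at hle

lemma IsReducedWord.getD_ne_getD_succ {w : List ℕ} (hw : IsReducedWord w) {i : ℕ}
    (hi : i + 1 < w.length) : w.getD i 0 ≠ w.getD (i + 1) 0 := by
  intro heq
  have hsplit : w = w.take i ++ w[i] :: w[i + 1] :: w.drop (i + 2) := by
    rw [← List.drop_eq_getElem_cons hi, ← List.drop_eq_getElem_cons, List.take_append_drop]
  rw [List.getD_eq_getElem _ _ (by omega), List.getD_eq_getElem _ _ hi] at heq
  rw [hsplit, heq] at hw
  exact not_isReducedWord_append_cons_cons_self _ _ _ hw

lemma lt_iff_lt_of_decrement_of_ne {a b a' b' : ℕ} (ha : a' = a ∨ a' + 1 = a)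
    (hb : b' = b ∨ b' + 1 = b) (hab : a ≠ b) (hab' : a' ≠ b') : b' < a' ↔ b < a := by
  omega

/-- If `v` and `w` are reduced words of the same length such that each entry of `v` equals
the corresponding entry of `w` or that entry decremented by one (as in a Little bump),
then `v` and `w` have the same descent set. -/
theorem little_bump_preserves_descents (w v : List ℕ)
    (hlen : v.length = w.length)
    (hw : IsReducedWord w) (hv : IsReducedWord v)
    (hdec : ∀ i : ℕ, i < w.length → v.getD i 0 = w.getD i 0 ∨ v.getD i 0 + 1 = w.getD i 0) :
    ∀ i : ℕ, i + 1 < w.length →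
      (v.getD (i + 1) 0 < v.getD i 0 ↔ w.getD (i + 1) 0 < w.getD i 0) := by
  intro i hi
  exact lt_iff_lt_of_decrement_of_ne (hdec i (by omega)) (hdec (i + 1) hi)
    (hw.getD_ne_getD_succ hi) (hv.getD_ne_getD_succ (hlen ▸ hi))
end

section
/- The map sending a reduced word w of a fixed Grassmannian permutation σ (with descent at position k and shape λ) to the tableau Tab(w), whose (row, column) cell indexed by (a_i, b_j) contains m+1−l when the l-th letter of w exchanges a_i and b_j, is a bijection between reduced words of σ and standard Young tableaux of shape λ. -/
/-- The (values of the) pair of wires crossing at step `t` (0-indexed) of the wiring diagram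
of the word `w`: the values in positions `w_t` and `w_t + 1` just before step `t`. -/
def crossing (w : List ℕ) (t : ℕ) : ℕ × ℕ :=
  (wordPerm (w.take t) (w.getD t 0), wordPerm (w.take t) (w.getD t 0 + 1))

/-- Two ordered pairs represent the same unordered crossing. -/
def SameCross (p q : ℕ × ℕ) : Prop := p = q ∨ p = (q.2, q.1)

instance (p q : ℕ × ℕ) : Decidable (SameCross p q) := by
  unfold SameCross; infer_instance
/-- The tableau `Tab(w)` of a reduced word `w` of a Grassmannian permutation with descent at
position `k` (positions are 1-indexed; cells `(r, c)` are 0-indexed).  The cell `(r, c)`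
corresponds to the inversion exchanging the values in positions `k - r` and `k + 1 + c`;
if that exchange happens at step `t` (0-indexed), the entry is `m - t`. -/
def tabFun (w : List ℕ) (k : ℕ) : ℕ × ℕ → ℕ := fun rc =>
  ∑ t ∈ Finset.range w.length,
    if rc.1 < k ∧
        SameCross (crossing w t)
          (wordPerm w (k - rc.1), wordPerm w (k + 1 + rc.2)) then
      w.length - t
    else 0

/-- `f : ℕ × ℕ → ℕ` is a standard Young tableau on the set of cells `C`: it vanishes
off `C`, maps `C` bijectively onto `{1, …, |C|}`, and strictly increases along rows and
down columns. -/
def IsSYTon (C : Finset (ℕ × ℕ)) (f : ℕ × ℕ → ℕ) : Prop :=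
  (∀ c, c ∉ C → f c = 0) ∧
  Set.BijOn f (↑C) (↑(Finset.Icc 1 C.card)) ∧
  (∀ c ∈ C, ∀ d ∈ C, c.1 = d.1 → c.2 < d.2 → f c < f d) ∧
  (∀ c ∈ C, ∀ d ∈ C, c.2 = d.2 → c.1 < d.1 → f c < f d)

/-- The cells of the shape `λ` of a Grassmannian permutation `σ` with descent at `k`:
cell `(r, c)` (0-indexed) corresponds to the inversion exchanging the values in
positions `k − r` and `k + 1 + c`. -/
def invCells (σ : Equiv.Perm ℕ) (n k : ℕ) : Finset (ℕ × ℕ) :=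
  (Finset.range n ×ˢ Finset.range n).filter
    (fun rc => rc.1 < k ∧ k + 1 + rc.2 ≤ n ∧ σ (k + 1 + rc.2) < σ (k - rc.1))


/-!
The inversions of a Grassmannian permutation `σ` are exactly the pairs `(p, q)` with
`p ≤ k < q`, so they are the cells of `λ`, and a word of `σ` is reduced iff it has `|λ|` letters
(a word of length `m` has at most `m` inversions, and peeling off corners produces a word of
length `|λ|`). The first letter `j` of a reduced word swaps the values `j + 1` and `j`, sitting at
positions `p ≤ k < q`; the cell of `(p, q)` is a corner of `λ` exactly when `σ p = σ q + 1`, and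
then `s_j σ` is Grassmannian of shape `λ` minus that corner. `Tab (j :: w)` is `Tab w` with the
largest entry `m` added in that corner, and conversely the largest entry of a standard tableau
always sits in a corner, so induction on `m` matches reduced words with standard tableaux.
-/

lemma sgen_apply (j x : ℕ) : sgen j x = if x = j then j + 1 else if x = j + 1 then j else x := by
  simp [sgen, Equiv.swap_apply_def]

lemma wordPerm_cons (j : ℕ) (w : List ℕ) : wordPerm (j :: w) = sgen j * wordPerm w := by
  simp [wordPerm]

lemma wordPerm_cons_eq_iff {j : ℕ} {w : List ℕ} {σ : Equiv.Perm ℕ} :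
    wordPerm (j :: w) = σ ↔ wordPerm w = sgen j * σ := by
  rw [wordPerm_cons, ← eq_inv_mul_iff_mul_eq, sgen, Equiv.swap_inv]

lemma sgen_mul_apply {σ : Equiv.Perm ℕ} {p q j : ℕ} (hp : σ p = j + 1) (hq : σ q = j) (i : ℕ) :
    (sgen j * σ) i = if i = p then j else if i = q then j + 1 else σ i := by
  have hip : σ i = j + 1 → i = p := fun h => σ.injective (h.trans hp.symm)
  have hiq : σ i = j → i = q := fun h => σ.injective (h.trans hq.symm)
  rw [Equiv.Perm.mul_apply, sgen_apply]
  split_ifs <;> subst_vars <;> omega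

def invSet (π : Equiv.Perm ℕ) : Set (ℕ × ℕ) := {pq | pq.1 < pq.2 ∧ π pq.2 < π pq.1}

lemma mem_invSet {π : Equiv.Perm ℕ} {p q : ℕ} : (p, q) ∈ invSet π ↔ p < q ∧ π q < π p := Iff.rfl

lemma eq_one_of_invSet_eq_empty {π : Equiv.Perm ℕ} (h : invSet π = ∅) : π = 1 := by
  have hmono : StrictMono π := fun a b hab =>
    lt_of_le_of_ne (not_lt.1 fun hlt => (h ▸ ⟨hab, hlt⟩ : (a, b) ∈ (∅ : Set (ℕ × ℕ))))
      (π.injective.ne hab.ne)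
  have hmono' : StrictMono π.symm := fun a b hab => hmono.lt_iff_lt.1 (by simpa using hab)
  ext i
  have h := hmono.monotone (hmono'.id_le i)
  rw [Equiv.apply_symm_apply] at h
  exact le_antisymm h (hmono.id_le i)

lemma invSet_sgen_mul_subset (π : Equiv.Perm ℕ) (j : ℕ) :
    invSet (sgen j * π) ⊆
      insert (min (π.symm j) (π.symm (j + 1)), max (π.symm j) (π.symm (j + 1))) (invSet π) := by
  rintro ⟨p, q⟩ ⟨hpq, h⟩
  dsimp only at hpq h
  by_cases hj : π p = j ∧ π q = j + 1
  · left
    rw [π.symm_apply_eq.2 hj.1.symm, π.symm_apply_eq.2 hj.2.symm, min_eq_left hpq.le,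
      max_eq_right hpq.le]
  · right
    have hne := π.injective.ne hpq.ne
    simp only [Equiv.Perm.mul_apply, sgen_apply] at h
    exact ⟨hpq, show π q < π p by split_ifs at h <;> omega⟩

lemma encard_invSet_wordPerm_le (w : List ℕ) : (invSet (wordPerm w)).encard ≤ w.length := by
  induction w with
  | nil =>
    simpa [wordPerm] using
      Set.eq_empty_of_forall_notMem fun pq (h : pq ∈ invSet 1) => lt_asymm h.1 h.2
  | cons j w ih =>
    calc (invSet (wordPerm (j :: w))).encard
        ≤ (invSet (wordPerm w)).encard + 1 := by
          rw [wordPerm_cons]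
          exact (Set.encard_le_encard (invSet_sgen_mul_subset _ j)).trans (Set.encard_insert_le _ _)
      _ ≤ (j :: w).length := by simpa using add_le_add_right ih 1

lemma insert_subset_invSet_sgen_mul {π : Equiv.Perm ℕ} {j a b : ℕ}
    (ha : π a = j) (hb : π b = j + 1) (hab : a < b) :
    insert (a, b) (invSet π) ⊆ invSet (sgen j * π) := by
  rintro ⟨p, q⟩ (h | ⟨hpq, h⟩)
  · simp only [Prod.mk.injEq] at h
    obtain ⟨rfl, rfl⟩ := h
    exact ⟨hab, by simp [sgen_apply, ha, hb]⟩
  · dsimp only at hpq h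
    have hqa : π q = j → q = a := fun e => π.injective (e.trans ha.symm)
    have hpb : π p = j + 1 → p = b := fun e => π.injective (e.trans hb.symm)
    have hne := π.injective.ne hpq.ne
    refine ⟨hpq, ?_⟩
    simp only [Equiv.Perm.mul_apply, sgen_apply]
    split_ifs <;> omega

lemma isReducedWordOf_iff_length_eq {σ : Equiv.Perm ℕ} {L : ℕ}
    (hle : ∀ v, wordPerm v = σ → L ≤ v.length) (hex : ∃ v, wordPerm v = σ ∧ v.length = L)
    {w : List ℕ} : IsReducedWordOf σ w ↔ wordPerm w = σ ∧ w.length = L := by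
  obtain ⟨v, hv, hvL⟩ := hex
  constructor
  · rintro ⟨hw, hmin⟩
    exact ⟨hw, le_antisymm (hvL ▸ hmin v (hv.trans hw.symm)) (hle w hw)⟩
  · rintro ⟨hw, hwL⟩
    exact ⟨hw, fun u hu => hwL ▸ hle u (hu.trans hw)⟩

def IsCornerCell (C : Finset (ℕ × ℕ)) (x : ℕ × ℕ) : Prop :=
  x ∈ C ∧ ∀ d ∈ C, (d.1 = x.1 → d.2 ≤ x.2) ∧ (d.2 = x.2 → d.1 ≤ x.1)

lemma exists_isCornerCell {C : Finset (ℕ × ℕ)} (hC : C.Nonempty) : ∃ x, IsCornerCell C x := by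
  obtain ⟨x, hx, hmax⟩ := C.exists_max_image toLex hC
  refine ⟨x, hx, fun d hd => ?_⟩
  have := Prod.Lex.le_iff.1 (hmax d hd)
  constructor <;> intro h <;> simp only [ofLex_toLex] at this <;> omega

namespace IsSYTon

variable {C : Finset (ℕ × ℕ)} {f : ℕ × ℕ → ℕ} {x : ℕ × ℕ}

lemma empty : IsSYTon ∅ 0 := by
  refine ⟨fun _ _ => rfl, ?_, by simp, by simp⟩
  simp [Set.bijOn_empty_iff_left]

lemma apply_le_card (hf : IsSYTon C f) {c : ℕ × ℕ} (hc : c ∈ C) : f c ≤ C.card :=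
  (Finset.mem_Icc.1 (hf.2.1.mapsTo hc)).2

lemma isCornerCell_of_apply_eq_card (hf : IsSYTon C f) (hx : x ∈ C) (hfx : f x = C.card) :
    IsCornerCell C x := by
  refine ⟨hx, fun d hd => ⟨fun h => not_lt.1 fun hlt => ?_, fun h => not_lt.1 fun hlt => ?_⟩⟩
  · exact (hf.2.2.1 x hx d hd h.symm hlt).not_ge (hfx ▸ hf.apply_le_card hd)
  · exact (hf.2.2.2 x hx d hd h.symm hlt).not_ge (hfx ▸ hf.apply_le_card hd)

lemma erase (hf : IsSYTon C f) (hx : x ∈ C) (hfx : f x = C.card) :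
    IsSYTon (C.erase x) (Function.update f x 0) := by
  obtain ⟨hzero, hbij, hrow, hcol⟩ := hf
  refine ⟨fun c hc => ?_, ?_, fun c hc d hd => ?_, fun c hc d hd => ?_⟩
  · rcases eq_or_ne c x with rfl | hcx
    · simp
    · simp [hcx, hzero c (by simpa [hcx] using hc)]
  · have hIcc : (Finset.Icc 1 (C.erase x).card : Set ℕ) = ↑(Finset.Icc 1 C.card) \ {f x} := by
      ext v
      simp only [Finset.card_erase_of_mem hx, hfx, Finset.coe_Icc, Set.mem_Icc, Set.mem_sdiff,
        Set.mem_singleton_iff]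
      omega
    rw [Finset.coe_erase, hIcc]
    exact (hbij.sdiff_singleton hx).congr fun c hc =>
      (Function.update_of_ne (by simpa using hc.2) _ _).symm
  · simp only [Finset.mem_erase] at hc hd
    simpa [hc.1, hd.1] using hrow c hc.2 d hd.2
  · simp only [Finset.mem_erase] at hc hd
    simpa [hc.1, hd.1] using hcol c hc.2 d hd.2

lemma add_single (hf : IsSYTon (C.erase x) f) (hx : IsCornerCell C x) :
    IsSYTon C (f + Pi.single x C.card) := by
  have hcard : (C.erase x).card + 1 = C.card := Finset.card_erase_add_one hx.1
  set g : ℕ × ℕ → ℕ := f + Pi.single x C.card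
  have hg : ∀ c ∈ C, c ≠ x → g c = f c ∧ f c < C.card := fun c hc hcx =>
    ⟨by simp [g, hcx], by have := hf.apply_le_card (Finset.mem_erase.2 ⟨hcx, hc⟩); omega⟩
  obtain ⟨hzero, hbij, hrow, hcol⟩ := hf
  have hgx : g x = C.card := by simp [g, hzero x (Finset.notMem_erase x C)]
  have hlt_of_ne : ∀ c ∈ C, ∀ d ∈ C, c ≠ x → (d ≠ x → f c < f d) → g c < g d := by
    intro c hc d hd hcx h
    rw [(hg c hc hcx).1]
    rcases eq_or_ne d x with rfl | hdx
    · exact hgx ▸ (hg c hc hcx).2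
    · exact (hg d hd hdx).1 ▸ h hdx
  refine ⟨fun c hc => ?_, ?_, fun c hc d hd hcd hlt => ?_, fun c hc d hd hcd hlt => ?_⟩
  · have hcx : c ≠ x := (ne_of_mem_of_not_mem hx.1 hc).symm
    simp [g, hcx, hzero c (by simp [hc])]
  · have hC : (C : Set (ℕ × ℕ)) = insert x ↑(C.erase x) := by
      rw [← Finset.coe_insert, Finset.insert_erase hx.1]
    have hIcc : Finset.Icc 1 C.card = insert (g x) (Finset.Icc 1 (C.erase x).card) := by
      rw [hgx, ← hcard, Finset.insert_Icc_right_eq_Icc_add_one (by omega)]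
    rw [hC, hIcc, Finset.coe_insert]
    refine (hbij.congr fun c hc => ?_).insert ?_
    · exact (hg c (Finset.mem_of_mem_erase hc) (Finset.ne_of_mem_erase hc)).1.symm
    · rw [hgx, Finset.mem_coe, Finset.mem_Icc]
      omega
  · rcases eq_or_ne c x with rfl | hcx
    · exact absurd ((hx.2 d hd).1 hcd.symm) (by omega)
    exact hlt_of_ne c hc d hd hcx fun hdx =>
      hrow c (Finset.mem_erase.2 ⟨hcx, hc⟩) d (Finset.mem_erase.2 ⟨hdx, hd⟩) hcd hlt
  · rcases eq_or_ne c x with rfl | hcx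
    · exact absurd ((hx.2 d hd).2 hcd.symm) (by omega)
    exact hlt_of_ne c hc d hd hcx fun hdx =>
      hcol c (Finset.mem_erase.2 ⟨hcx, hc⟩) d (Finset.mem_erase.2 ⟨hdx, hd⟩) hcd hlt

end IsSYTon

lemma tabFun_nil (k : ℕ) : tabFun [] k = 0 := by
  funext x
  simp [tabFun]

lemma sameCross_apply_iff (e : Equiv.Perm ℕ) (a b c d : ℕ) :
    SameCross (e a, e b) (e c, e d) ↔ SameCross (a, b) (c, d) := by
  simp [SameCross, e.injective.eq_iff]

lemma crossing_cons_succ (j : ℕ) (w : List ℕ) (t : ℕ) :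
    crossing (j :: w) (t + 1) = (sgen j (crossing w t).1, sgen j (crossing w t).2) := by
  simp [crossing, wordPerm_cons]

lemma tabFun_cons (j : ℕ) (w : List ℕ) (k : ℕ) :
    tabFun (j :: w) k = tabFun w k + fun x =>
      if x.1 < k ∧ SameCross (j, j + 1)
          (wordPerm (j :: w) (k - x.1), wordPerm (j :: w) (k + 1 + x.2))
        then w.length + 1 else 0 := by
  funext x
  rw [tabFun, List.length_cons, Finset.sum_range_succ', Pi.add_apply, tabFun]
  congr 1
  refine Finset.sum_congr rfl fun t _ => if_congr ?_ (by omega) rfl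
  rw [crossing_cons_succ, wordPerm_cons, Equiv.Perm.mul_apply, Equiv.Perm.mul_apply,
    sameCross_apply_iff]

lemma mem_invCells {σ : Equiv.Perm ℕ} {n k : ℕ} {x : ℕ × ℕ} :
    x ∈ invCells σ n k ↔ x.1 < k ∧ k + 1 + x.2 ≤ n ∧ σ (k + 1 + x.2) < σ (k - x.1) := by
  simp only [invCells, Finset.mem_filter, Finset.mem_product, Finset.mem_range]
  omega

lemma exists_mem_invSet_of_mem_invCells {σ : Equiv.Perm ℕ} {n k : ℕ} {x : ℕ × ℕ}
    (hx : x ∈ invCells σ n k) : ∃ p q, (p, q) ∈ invSet σ ∧ x = (k - p, q - k - 1) := by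
  rw [mem_invCells] at hx
  exact ⟨k - x.1, k + 1 + x.2, ⟨by omega, hx.2.2⟩, Prod.ext (by omega) (by omega)⟩

lemma card_invCells_le_encard_invSet (σ : Equiv.Perm ℕ) (n k : ℕ) :
    ((invCells σ n k).card : ℕ∞) ≤ (invSet σ).encard := by
  rw [← Set.encard_coe_eq_coe_finsetCard]
  refine Set.encard_le_encard_of_injOn (f := fun x => (k - x.1, k + 1 + x.2)) ?_ ?_
  · intro x hx
    rw [Finset.mem_coe, mem_invCells] at hx
    exact ⟨by dsimp only; omega, hx.2.2⟩
  · intro x hx y hy hxy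
    rw [Finset.mem_coe, mem_invCells] at hx hy
    simp only [Prod.mk.injEq] at hxy
    exact Prod.ext (by omega) (by omega)

lemma card_invCells_le_length {σ : Equiv.Perm ℕ} {w : List ℕ} (hw : wordPerm w = σ) (n k : ℕ) :
    (invCells σ n k).card ≤ w.length := by
  have := (card_invCells_le_encard_invSet σ n k).trans (hw ▸ encard_invSet_wordPerm_le w)
  exact_mod_cast this

structure IsGrassmannian (n k : ℕ) (σ : Equiv.Perm ℕ) : Prop where
  apply_zero : σ 0 = 0
  apply_of_lt : ∀ i, n < i → σ i = i
  apply_lt_apply_succ : ∀ i, 1 ≤ i → i ≠ k → σ i < σ (i + 1)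

namespace IsGrassmannian

variable {n k : ℕ} {σ : Equiv.Perm ℕ} {p q j : ℕ}

lemma apply_le (hσ : IsGrassmannian n k σ) {i : ℕ} (hi : i ≤ n) : σ i ≤ n := by
  by_contra h
  have := σ.injective (hσ.apply_of_lt (σ i) (by omega))
  omega

lemma strictMonoOn_Icc (hσ : IsGrassmannian n k σ) : StrictMonoOn σ (Set.Icc 1 k) :=
  strictMonoOn_of_lt_add_one Set.ordConnected_Icc fun i _ hi hi' =>
    hσ.apply_lt_apply_succ i hi.1 (by have := hi'.2; omega)

lemma strictMonoOn_Ioi (hσ : IsGrassmannian n k σ) : StrictMonoOn σ (Set.Ioi k) :=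
  strictMonoOn_of_lt_add_one Set.ordConnected_Ioi fun i _ (hi : k < i) _ =>
    hσ.apply_lt_apply_succ i (by omega) (by omega)

lemma bounds_of_mem_invSet (hσ : IsGrassmannian n k σ) (h : (p, q) ∈ invSet σ) :
    1 ≤ p ∧ p ≤ k ∧ k < q ∧ q ≤ n := by
  obtain ⟨hpq, hlt⟩ := mem_invSet.1 h
  have hp1 : 1 ≤ p := Nat.pos_of_ne_zero fun h0 => by rw [h0, hσ.apply_zero] at hlt; omega
  refine ⟨hp1, ?_, ?_, ?_⟩ <;> by_contra hcon
  · exact (hσ.strictMonoOn_Ioi (show k < p by omega) (show k < q by omega) hpq).asymm hlt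
  · exact (hσ.strictMonoOn_Icc ⟨hp1, by omega⟩ ⟨by omega, by omega⟩ hpq).asymm hlt
  · rw [hσ.apply_of_lt q (by omega)] at hlt
    rcases le_or_gt p n with hp | hp
    · have := hσ.apply_le hp
      omega
    · rw [hσ.apply_of_lt p hp] at hlt
      omega

lemma mem_invCells_of_mem_invSet (hσ : IsGrassmannian n k σ) (h : (p, q) ∈ invSet σ) :
    (k - p, q - k - 1) ∈ invCells σ n k := by
  have := hσ.bounds_of_mem_invSet h
  rw [mem_invCells, show k - (k - p) = p by omega, show k + 1 + (q - k - 1) = q by omega]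
  exact ⟨by omega, by omega, h.2⟩

lemma eq_one_of_invCells_eq_empty (hσ : IsGrassmannian n k σ) (h : invCells σ n k = ∅) :
    σ = 1 :=
  eq_one_of_invSet_eq_empty <| Set.eq_empty_of_forall_notMem fun _ hpq =>
    by simpa [h] using hσ.mem_invCells_of_mem_invSet hpq

lemma isCornerCell_iff (hσ : IsGrassmannian n k σ) (h : (p, q) ∈ invSet σ) :
    IsCornerCell (invCells σ n k) (k - p, q - k - 1) ↔ σ p = σ q + 1 := by
  obtain ⟨hp1, hpk, hkq, hqn⟩ := hσ.bounds_of_mem_invSet h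
  have hlt : σ q < σ p := h.2
  constructor
  · rintro ⟨-, hcorner⟩
    -- `σ p - 1` lies strictly between `σ q` and `σ p`; wherever it sits, it gives a cell below
    -- `(k - p, q - k - 1)` in its column or to its right in its row.
    by_contra hne
    obtain ⟨r, hr⟩ := σ.surjective (σ p - 1)
    have hr1 : 1 ≤ r := Nat.pos_of_ne_zero fun h0 => by rw [h0, hσ.apply_zero] at hr; omega
    rcases le_or_gt r k with hrk | hkr
    · have hrp : r < p := (hσ.strictMonoOn_Icc.lt_iff_lt ⟨hr1, hrk⟩ ⟨hp1, hpk⟩).1 (by omega)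
      have hrq : (r, q) ∈ invSet σ := mem_invSet.2 ⟨by omega, by omega⟩
      have := (hcorner _ (hσ.mem_invCells_of_mem_invSet hrq)).2 rfl
      dsimp only at this
      omega
    · have hqr : q < r := (hσ.strictMonoOn_Ioi.lt_iff_lt (show k < q from hkq) hkr).1 (by omega)
      have hpr : (p, r) ∈ invSet σ := mem_invSet.2 ⟨by omega, by omega⟩
      have := (hcorner _ (hσ.mem_invCells_of_mem_invSet hpr)).1 rfl
      dsimp only at this
      omega
  · intro hpq
    refine ⟨hσ.mem_invCells_of_mem_invSet h, fun d hd => ?_⟩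
    obtain ⟨p', q', h', rfl⟩ := exists_mem_invSet_of_mem_invCells hd
    obtain ⟨hp1', hpk', hkq', hqn'⟩ := hσ.bounds_of_mem_invSet h'
    have hlt' : σ q' < σ p' := h'.2
    refine ⟨fun hrow => ?_, fun hcol => ?_⟩
    · dsimp only at hrow ⊢
      obtain rfl : p' = p := by omega
      have := (hσ.strictMonoOn_Ioi.le_iff_le (show k < q' from hkq') (show k < q from hkq)).1
        (by omega)
      omega
    · dsimp only at hcol ⊢
      obtain rfl : q' = q := by omega
      have := (hσ.strictMonoOn_Icc.le_iff_le ⟨hp1, hpk⟩ ⟨hp1', hpk'⟩).1 (by omega)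
      omega

lemma sgen_mul (hσ : IsGrassmannian n k σ) (hpq : p < q) (hp : σ p = j + 1) (hq : σ q = j) :
    IsGrassmannian n k (sgen j * σ) := by
  obtain ⟨hp1, hpk, hkq, hqn⟩ := hσ.bounds_of_mem_invSet (mem_invSet.2 ⟨hpq, by omega⟩)
  refine ⟨?_, fun i hi => ?_, fun i hi hik => ?_⟩
  · rw [sgen_mul_apply hp hq, if_neg (by omega), if_neg (by omega), hσ.apply_zero]
  · rw [sgen_mul_apply hp hq, if_neg (by omega), if_neg (by omega), hσ.apply_of_lt i hi]
  · have hmono := hσ.apply_lt_apply_succ i hi hik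
    have hiq : σ i = j → i = q := fun h => σ.injective (h.trans hq.symm)
    have hip : σ (i + 1) = j + 1 → i + 1 = p := fun h => σ.injective (h.trans hp.symm)
    rw [sgen_mul_apply hp hq, sgen_mul_apply hp hq]
    split_ifs <;> subst_vars <;> omega

lemma invCells_sgen_mul (hσ : IsGrassmannian n k σ) (hpq : p < q) (hp : σ p = j + 1)
    (hq : σ q = j) : invCells (sgen j * σ) n k = (invCells σ n k).erase (k - p, q - k - 1) := by
  obtain ⟨hp1, hpk, hkq, hqn⟩ := hσ.bounds_of_mem_invSet (mem_invSet.2 ⟨hpq, by omega⟩)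
  ext ⟨r, c⟩
  have hrp : σ (k - r) = j + 1 → k - r = p := fun h => σ.injective (h.trans hp.symm)
  have hcq : σ (k + 1 + c) = j → k + 1 + c = q := fun h => σ.injective (h.trans hq.symm)
  simp only [Finset.mem_erase, mem_invCells, sgen_mul_apply hp hq, ne_eq, Prod.mk.injEq]
  split_ifs <;> subst_vars <;> omega

lemma exists_wordPerm_eq (hσ : IsGrassmannian n k σ) :
    ∃ v, wordPerm v = σ ∧ v.length = (invCells σ n k).card := by
  induction hm : (invCells σ n k).card generalizing σ with
  | zero =>
    refine ⟨[], ?_, rfl⟩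
    rw [hσ.eq_one_of_invCells_eq_empty (Finset.card_eq_zero.1 hm)]
    rfl
  | succ m ih =>
    obtain ⟨x, hx⟩ := exists_isCornerCell (Finset.card_pos.1 (by omega : 0 < (invCells σ n k).card))
    obtain ⟨p, q, hpq, rfl⟩ := exists_mem_invSet_of_mem_invCells hx.1
    have hp := (hσ.isCornerCell_iff hpq).1 hx
    have hcard := Finset.card_erase_of_mem hx.1
    rw [← hσ.invCells_sgen_mul hpq.1 hp rfl, hm] at hcard
    obtain ⟨v, hv, hlen⟩ := ih (hσ.sgen_mul hpq.1 hp rfl) hcard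
    exact ⟨σ q :: v, wordPerm_cons_eq_iff.2 hv, by simp [hlen]⟩

lemma isReducedWordOf_iff (hσ : IsGrassmannian n k σ) {w : List ℕ} :
    IsReducedWordOf σ w ↔ wordPerm w = σ ∧ w.length = (invCells σ n k).card :=
  isReducedWordOf_iff_length_eq (fun _ hv => card_invCells_le_length hv n k) hσ.exists_wordPerm_eq

lemma isReducedWordOf_cons_iff (hσ : IsGrassmannian n k σ) (hpq : p < q) (hp : σ p = j + 1)
    (hq : σ q = j) {w : List ℕ} : IsReducedWordOf σ (j :: w) ↔ IsReducedWordOf (sgen j * σ) w := by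
  have hcard := Finset.card_erase_add_one
    (hσ.mem_invCells_of_mem_invSet (mem_invSet.2 ⟨hpq, by omega⟩))
  rw [hσ.isReducedWordOf_iff, (hσ.sgen_mul hpq hp hq).isReducedWordOf_iff,
    hσ.invCells_sgen_mul hpq hp hq, wordPerm_cons_eq_iff, List.length_cons]
  exact and_congr_right' (by omega)

lemma exists_of_isReducedWordOf_cons (hσ : IsGrassmannian n k σ) {w : List ℕ}
    (hw : IsReducedWordOf σ (j :: w)) : ∃ p q, p < q ∧ σ p = j + 1 ∧ σ q = j := by
  refine ⟨σ.symm (j + 1), σ.symm j, ?_, σ.apply_symm_apply _, σ.apply_symm_apply _⟩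
  -- Otherwise `s_j σ` would have more inversions than `σ`, yet a word of length `|λ| - 1`.
  by_contra hle
  have hlt : σ.symm j < σ.symm (j + 1) :=
    lt_of_le_of_ne (not_lt.1 hle) (σ.symm.injective.ne (by omega))
  have hsub := insert_subset_invSet_sgen_mul (σ.apply_symm_apply j) (σ.apply_symm_apply (j + 1)) hlt
  have hnot : (σ.symm j, σ.symm (j + 1)) ∉ invSet σ := fun h => absurd h.2 (by simp)
  obtain ⟨hwσ, hlen⟩ := hσ.isReducedWordOf_iff.1 hw
  have := calc ((invCells σ n k).card : ℕ∞) + 1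
      ≤ (invSet σ).encard + 1 := by gcongr; exact card_invCells_le_encard_invSet σ n k
    _ = (insert (σ.symm j, σ.symm (j + 1)) (invSet σ)).encard :=
        (Set.encard_insert_of_notMem hnot).symm
    _ ≤ (invSet (wordPerm w)).encard := by
        rw [wordPerm_cons_eq_iff.1 hwσ]; exact Set.encard_le_encard hsub
    _ ≤ w.length := encard_invSet_wordPerm_le w
  rw [← hlen, List.length_cons] at this
  norm_cast at this
  omega

lemma tabFun_cons_eq_add_single (hσ : IsGrassmannian n k σ) (hpq : p < q) (hp : σ p = j + 1)
    (hq : σ q = j) {w : List ℕ} (hw : wordPerm (j :: w) = σ) :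
    tabFun (j :: w) k = tabFun w k + Pi.single (k - p, q - k - 1) (w.length + 1) := by
  obtain ⟨hp1, hpk, hkq, -⟩ := hσ.bounds_of_mem_invSet (mem_invSet.2 ⟨hpq, by omega⟩)
  rw [tabFun_cons, hw]
  congr 1
  funext x
  have hx : x.1 < k ∧ SameCross (j, j + 1) (σ (k - x.1), σ (k + 1 + x.2)) ↔
      x = (k - p, q - k - 1) := by
    constructor
    · rintro ⟨hxk, h | h⟩ <;> simp only [Prod.mk.injEq] at h
      · have : k - x.1 = q := σ.injective (h.1.symm.trans hq.symm)
        omega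
      · have hxp : k - x.1 = p := σ.injective (h.2.symm.trans hp.symm)
        have hxq : k + 1 + x.2 = q := σ.injective (h.1.symm.trans hq.symm)
        exact Prod.ext (by dsimp only; omega) (by dsimp only; omega)
    · rintro rfl
      rw [show k - (k - p) = p by omega, show k + 1 + (q - k - 1) = q by omega, hp, hq]
      exact ⟨by dsimp only; omega, Or.inr rfl⟩
  simp only [Pi.single_apply, hx]

lemma isSYTon_tabFun (hσ : IsGrassmannian n k σ) {w : List ℕ} (hw : IsReducedWordOf σ w) :
    IsSYTon (invCells σ n k) (tabFun w k) := by
  induction w generalizing σ with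
  | nil =>
    rw [Finset.card_eq_zero.1 (hσ.isReducedWordOf_iff.1 hw).2.symm, tabFun_nil]
    exact IsSYTon.empty
  | cons j w ih =>
    obtain ⟨p, q, hpq, hp, hq⟩ := hσ.exists_of_isReducedWordOf_cons hw
    have hS := ih (hσ.sgen_mul hpq hp hq) ((hσ.isReducedWordOf_cons_iff hpq hp hq).1 hw)
    rw [hσ.invCells_sgen_mul hpq hp hq] at hS
    obtain ⟨hwσ, hlen⟩ := hσ.isReducedWordOf_iff.1 hw
    rw [hσ.tabFun_cons_eq_add_single hpq hp hq hwσ, ← List.length_cons, hlen]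
    exact hS.add_single ((hσ.isCornerCell_iff (mem_invSet.2 ⟨hpq, by omega⟩)).2 (by omega))

lemma tabFun_cons_apply (hσ : IsGrassmannian n k σ) (hpq : p < q) (hp : σ p = j + 1)
    (hq : σ q = j) {w : List ℕ} (hw : IsReducedWordOf σ (j :: w)) :
    tabFun (j :: w) k (k - p, q - k - 1) = (invCells σ n k).card := by
  obtain ⟨hwσ, hlen⟩ := hσ.isReducedWordOf_iff.1 hw
  have hS := hσ.sgen_mul hpq hp hq |>.isSYTon_tabFun ((hσ.isReducedWordOf_cons_iff hpq hp hq).1 hw)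
  rw [hσ.invCells_sgen_mul hpq hp hq] at hS
  rw [hσ.tabFun_cons_eq_add_single hpq hp hq hwσ, Pi.add_apply, hS.1 _ (Finset.notMem_erase _ _),
    Pi.single_eq_same, ← hlen, List.length_cons, zero_add]

lemma eq_of_tabFun_cons_eq (hσ : IsGrassmannian n k σ) {j₁ j₂ : ℕ} {w₁ w₂ : List ℕ}
    (hw₁ : IsReducedWordOf σ (j₁ :: w₁)) (hw₂ : IsReducedWordOf σ (j₂ :: w₂))
    (h : tabFun (j₁ :: w₁) k = tabFun (j₂ :: w₂) k) : j₁ = j₂ := by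
  obtain ⟨p₁, q₁, hpq₁, hp₁, hq₁⟩ := hσ.exists_of_isReducedWordOf_cons hw₁
  obtain ⟨p₂, q₂, hpq₂, hp₂, hq₂⟩ := hσ.exists_of_isReducedWordOf_cons hw₂
  have hinv₁ : (p₁, q₁) ∈ invSet σ := mem_invSet.2 ⟨hpq₁, by omega⟩
  have hinv₂ : (p₂, q₂) ∈ invSet σ := mem_invSet.2 ⟨hpq₂, by omega⟩
  have hx : (k - p₁, q₁ - k - 1) = (k - p₂, q₂ - k - 1) := by
    refine (hσ.isSYTon_tabFun hw₂).2.1.injOn (hσ.mem_invCells_of_mem_invSet hinv₁)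
      (hσ.mem_invCells_of_mem_invSet hinv₂) ?_
    rw [← congrFun h, hσ.tabFun_cons_apply hpq₁ hp₁ hq₁ hw₁,
      hσ.tabFun_cons_apply hpq₂ hp₂ hq₂ hw₂]
  have := (hσ.bounds_of_mem_invSet hinv₁).2.2.1
  have := (hσ.bounds_of_mem_invSet hinv₂).2.2.1
  simp only [Prod.mk.injEq] at hx
  rw [← hq₁, ← hq₂, show q₁ = q₂ by omega]

lemma injOn_tabFun (hσ : IsGrassmannian n k σ) :
    Set.InjOn (fun w => tabFun w k) {w | IsReducedWordOf σ w} := by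
  intro w₁ hw₁ w₂ hw₂ h
  induction w₁ generalizing σ w₂ with
  | nil =>
    have := (hσ.isReducedWordOf_iff.1 hw₁).2.trans (hσ.isReducedWordOf_iff.1 hw₂).2.symm
    exact (List.length_eq_zero_iff.1 this.symm).symm
  | cons j w₁ ih =>
    obtain ⟨hw₁σ, hlen₁⟩ := hσ.isReducedWordOf_iff.1 hw₁
    obtain ⟨hw₂σ, hlen₂⟩ := hσ.isReducedWordOf_iff.1 hw₂
    obtain _ | ⟨j₂, w₂⟩ := w₂
    · simp only [List.length_cons, List.length_nil] at hlen₁ hlen₂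
      omega
    obtain rfl := hσ.eq_of_tabFun_cons_eq hw₁ hw₂ h
    obtain ⟨p, q, hpq, hp, hq⟩ := hσ.exists_of_isReducedWordOf_cons hw₁
    simp only [hσ.tabFun_cons_eq_add_single hpq hp hq hw₁σ,
      hσ.tabFun_cons_eq_add_single hpq hp hq hw₂σ, List.length_cons] at h hlen₁ hlen₂
    rw [hlen₁, hlen₂, add_left_inj] at h
    rw [ih (hσ.sgen_mul hpq hp hq) ((hσ.isReducedWordOf_cons_iff hpq hp hq).1 hw₁)
      ((hσ.isReducedWordOf_cons_iff hpq hp hq).1 hw₂) h]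

lemma exists_tabFun_eq (hσ : IsGrassmannian n k σ) {f : ℕ × ℕ → ℕ}
    (hf : IsSYTon (invCells σ n k) f) : ∃ w, IsReducedWordOf σ w ∧ tabFun w k = f := by
  induction hm : (invCells σ n k).card generalizing σ f with
  | zero =>
    have hC := Finset.card_eq_zero.1 hm
    refine ⟨[], hσ.isReducedWordOf_iff.2 ⟨?_, hm.symm⟩, ?_⟩
    · rw [hσ.eq_one_of_invCells_eq_empty hC]; rfl
    · funext x
      simp [tabFun_nil, hf.1 x (by simp [hC])]
  | succ m ih =>
    obtain ⟨x, hxC, hfx⟩ := hf.2.1.surjOn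
      (Finset.mem_coe.2 (Finset.mem_Icc.2 ⟨by omega, le_rfl⟩) :
        (invCells σ n k).card ∈ (Finset.Icc 1 (invCells σ n k).card : Set ℕ))
    have hcorner := hf.isCornerCell_of_apply_eq_card hxC hfx
    obtain ⟨p, q, hpq, rfl⟩ := exists_mem_invSet_of_mem_invCells hxC
    have hp := (hσ.isCornerCell_iff hpq).1 hcorner
    have hf' := hf.erase hxC hfx
    rw [← hσ.invCells_sgen_mul hpq.1 hp rfl] at hf'
    obtain ⟨w, hw, hwf⟩ := ih (hσ.sgen_mul hpq.1 hp rfl) hf'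
      (by rw [hσ.invCells_sgen_mul hpq.1 hp rfl, Finset.card_erase_of_mem hxC, hm]; rfl)
    have hw' := (hσ.isReducedWordOf_cons_iff hpq.1 hp rfl).2 hw
    refine ⟨σ q :: w, hw', ?_⟩
    have hlen := (hσ.isReducedWordOf_iff.1 hw').2
    rw [List.length_cons] at hlen
    rw [hσ.tabFun_cons_eq_add_single hpq.1 hp rfl hw'.1, hwf, hlen, ← hfx]
    funext c
    rcases eq_or_ne c (k - p, q - k - 1) with rfl | hc <;> simp [*]

end IsGrassmannian

theorem tab_bijection_general (n k : ℕ) (σ : Equiv.Perm ℕ)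
    (hσ : ∀ i : ℕ, i = 0 ∨ n < i → σ i = i)
    (hdesc : ∀ i : ℕ, 1 ≤ i → (σ (i + 1) < σ i ↔ i = k)) :
    Set.BijOn (fun w => tabFun w k)
      {w : List ℕ | IsReducedWordOf σ w}
      {f : ℕ × ℕ → ℕ | IsSYTon (invCells σ n k) f} := by
  have hG : IsGrassmannian n k σ :=
    ⟨hσ 0 (Or.inl rfl), fun i hi => hσ i (Or.inr hi), fun i hi hik =>
      lt_of_le_of_ne (not_lt.1 fun h => hik ((hdesc i hi).1 h)) (σ.injective.ne (by omega))⟩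
  exact ⟨fun _ hw => hG.isSYTon_tabFun hw, hG.injOn_tabFun, fun _ hf => hG.exists_tabFun_eq hf⟩

/-- For a Grassmannian permutation `σ` with descent at position `k` and shape `λ`, the map
`w ↦ Tab(w)` is a bijection between the reduced words of `σ` and the standard Young
tableaux of shape `λ`. -/
theorem tab_bijection (n k : ℕ) (σ : Equiv.Perm ℕ)
    (hk : 1 ≤ k ∧ k < n)
    (hσ : ∀ i : ℕ, i = 0 ∨ n < i → σ i = i)
    (hdesc : ∀ i : ℕ, 1 ≤ i → (σ (i + 1) < σ i ↔ i = k)) :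
    Set.BijOn (fun w => tabFun w k)
      {w : List ℕ | IsReducedWordOf σ w}
      {f : ℕ × ℕ → ℕ | IsSYTon (invCells σ n k) f} :=
  tab_bijection_general n k σ hσ hdesc
end

section
/- Let T be a row-and-column strict tableau (entries strictly increasing along rows and down columns) whose column reading word τ(T) (columns read top to bottom, from the rightmost column to the leftmost) is a reduced word. Then Edelman-Greene insertion of τ(T) recovers T: P(τ(T)) = T, and each column of the recording tableau Q(τ(T)) consists of consecutive integers. -/
/-- One row-insertion step of Edelman–Greene insertion: insert `x` into the row `R`,
returning the new row together with the entry (if any) bumped into the next row. -/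
def rowIns (x : ℕ) (R : List ℕ) : List ℕ × Option ℕ :=
  if R.all (fun y => decide (y ≤ x)) then (R ++ [x], none)
  else
    let j := R.findIdx (fun y => decide (x < y))
    if R.getD j 0 = x + 1 ∧ 0 < j ∧ R.getD (j - 1) 0 = x then (R, some (x + 1))
    else (R.set j x, some (R.getD j 0))

/-- Edelman–Greene insertion of a letter `x` into a tableau, given as a list of rows. -/
def egInsert (x : ℕ) : List (List ℕ) → List (List ℕ)
  | [] => [[x]]
  | R :: T =>
    match rowIns x R with
    | (R', none) => R' :: T
    | (R', some y) => R' :: egInsert y T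

/-- The Edelman–Greene insertion tableau `P(w)`: the letters of `w` are inserted
from right to left. -/
def egP (w : List ℕ) : List (List ℕ) := w.foldr egInsert []

/-- The shape of a tableau: the list of its row lengths. -/
def shapeOf (T : List (List ℕ)) : List ℕ := T.map List.length

/-- The Edelman–Greene recording tableau `Q(w)`, as a function assigning to each cell
`(r, c)` (0-indexed) of the shape of `P(w)` the step at which that cell was created
(letters are inserted from right to left; steps are numbered `1, …, m`), and `0`
to cells outside the shape. -/
def egQfun (w : List ℕ) : ℕ × ℕ → ℕ := fun rc =>
  if rc.2 < (shapeOf (egP w)).getD rc.1 0 then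
    ((Finset.range w.length).filter
      (fun j => ¬ rc.2 < (shapeOf (egP (w.drop (w.length - j)))).getD rc.1 0)).card
  else 0

/-- The column reading word of a tableau: columns are read top to bottom, from the
rightmost column to the leftmost. -/
def colWord (T : List (List ℕ)) : List ℕ :=
  ((List.range ((T.map List.length).foldr max 0)).reverse).flatMap
    (fun j => T.filterMap (fun R => R[j]?))

/-!
Reading `colWord T` from right to left inserts the columns of `T` from left to right, each from
the bottom up. Suppose the first `c` columns of `T` have been inserted, so that `P` consists of
exactly these columns. Inserting column `c` bottom-up, each new letter lands in column `c` of the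
top row and pushes the letters of column `c` inserted before it one row down. Every step is an
ordinary bump: the entries of a row to the left of column `c` are smaller than every entry of
column `c` from that row down, so the Edelman–Greene exceptional case never occurs. Hence, once
the bottom `r` letters of column `c` are in, column `c` of `P` occupies rows `0, …, r - 1`: cell
`(i, c)` is created by the letter at position `|τ(first c columns)| + i + 1` from the right, and
cells in consecutive rows of a column are created at consecutive steps.
-/

lemma List.IsSuffix.rtake_eq {α : Type*} {l₁ l₂ : List α} {n : ℕ} (h : l₁ <:+ l₂)
    (hn : n ≤ l₁.length) : l₂.rtake n = l₁.rtake n := by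
  obtain ⟨U, rfl⟩ := h
  simp only [List.rtake, List.length_append, List.drop_append,
    List.drop_eq_nil_of_le (show U.length ≤ U.length + l₁.length - n by omega), List.nil_append]
  congr 1; omega

lemma List.rtake_append_of_le {α : Type*} {l₁ l₂ : List α} {n : ℕ} (hn : n ≤ l₁.length) :
    (l₁ ++ l₂).rtake (n + l₂.length) = l₁.rtake n ++ l₂ := by
  simp only [List.rtake, List.length_append]
  rw [List.drop_append_of_le_length (by omega)]
  congr 2; omega

lemma egP_append (u v : List ℕ) : egP (u ++ v) = u.foldr egInsert (egP v) := List.foldr_append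

lemma getD_le_getD_of_pairwise {α : Type*} [Preorder α] {l : List α} {d : α}
    (hl : l.Pairwise (· < ·)) {i j : ℕ} (hij : i ≤ j) (hj : j < l.length) :
    l.getD i d ≤ l.getD j d := by
  rcases hij.eq_or_lt with rfl | hlt
  · rfl
  rw [List.getD_eq_getElem _ _ (by omega), List.getD_eq_getElem _ _ hj]
  exact (List.pairwise_iff_getElem.1 hl i j _ hj hlt).le

lemma lt_getD_of_mem_take {α : Type*} [Preorder α] {l : List α} {d y : α}
    (hl : l.Pairwise (· < ·)) {c : ℕ} (hc : c < l.length) (hy : y ∈ l.take c) : y < l.getD c d := by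
  obtain ⟨k, hk, rfl⟩ := List.mem_iff_getElem.1 hy
  rw [List.getElem_take, List.getD_eq_getElem _ _ hc]
  exact List.pairwise_iff_getElem.1 hl _ _ _ hc (by simp at hk; omega)

lemma lt_length_of_lt_length_getD {α : Type*} {l : List (List α)} {i c : ℕ}
    (h : c < (l.getD i []).length) : i < l.length := by
  by_contra! hi
  rw [List.getD_eq_default _ _ hi] at h
  exact Nat.not_lt_zero c h

lemma getD_mem_of_lt_length_getD {α : Type*} {l : List (List α)} {i c : ℕ}
    (h : c < (l.getD i []).length) : l.getD i [] ∈ l := by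
  have hi := lt_length_of_lt_length_getD h
  rw [List.getD_eq_getElem _ _ hi]
  exact List.getElem_mem hi

lemma rowIns_of_forall_le {x : ℕ} {R : List ℕ} (h : ∀ y ∈ R, y ≤ x) :
    rowIns x R = (R ++ [x], none) := by
  have hall : R.all (fun y => decide (y ≤ x)) = true := by simpa using h
  simp only [rowIns, hall, if_true]

lemma rowIns_append_singleton {x v : ℕ} {A : List ℕ} (hA : ∀ y ∈ A, y < x) (hv : x < v) :
    rowIns x (A ++ [v]) = (A ++ [x], some v) := by
  have hall : (A ++ [v]).all (fun y => decide (y ≤ x)) = false := by simpa using fun _ => hv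
  have hidx : (A ++ [v]).findIdx (fun y => decide (x < y)) = A.length := by
    rw [List.findIdx_append,
      List.findIdx_eq_length_of_false (by simpa using fun y hy => (hA y hy).le)]
    simp [hv]
  have hprev (h : 0 < A.length) : (A ++ [v]).getD (A.length - 1) 0 < x := by
    rw [List.getD_append _ _ _ _ (by omega), List.getD_eq_getElem _ _ (by omega)]
    exact hA _ (List.getElem_mem _)
  simp only [rowIns, hall, hidx, Bool.false_eq_true, if_false]
  rw [if_neg fun ⟨_, h0, hx⟩ => (hprev h0).ne hx, List.getD_append_right _ _ _ _ le_rfl]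
  simp

lemma length_le_rowIns_fst (x : ℕ) (R : List ℕ) : R.length ≤ (rowIns x R).1.length := by
  unfold rowIns
  split
  · simp
  · dsimp only
    split <;> simp

lemma shapeOf_getD_le_egInsert (x : ℕ) (S : List (List ℕ)) (i : ℕ) :
    (shapeOf S).getD i 0 ≤ (shapeOf (egInsert x S)).getD i 0 := by
  induction S generalizing x i with
  | nil => simp [shapeOf]
  | cons R S ih =>
    have hR := length_le_rowIns_fst x R
    rcases h : rowIns x R with ⟨R', _ | y⟩ <;> rw [h] at hR <;> cases i <;>
      simp_all [egInsert, shapeOf]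

lemma monotone_shapeOf_getD_egP_rtake (w : List ℕ) (i : ℕ) :
    Monotone fun n => (shapeOf (egP (w.rtake n))).getD i 0 := by
  refine monotone_nat_of_le_succ fun n => ?_
  rcases lt_or_ge n w.length with hn | hn
  · have hcons : w.rtake (n + 1) = w[w.length - (n + 1)] :: w.rtake n := by
      rw [List.rtake, List.drop_eq_getElem_cons (by omega), List.rtake]
      congr 2; omega
    rw [hcons]
    exact shapeOf_getD_le_egInsert _ _ _
  · simp only [List.rtake, show w.length - (n + 1) = w.length - n by omega, le_rfl]

lemma egQfun_eq_succ {w : List ℕ} {r c k : ℕ} (hk : k < w.length)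
    (hout : ¬ c < (shapeOf (egP (w.rtake k))).getD r 0)
    (hin : c < (shapeOf (egP (w.rtake (k + 1)))).getD r 0) :
    egQfun w (r, c) = k + 1 := by
  have hmono := monotone_shapeOf_getD_egP_rtake w r
  have hfull : c < (shapeOf (egP w)).getD r 0 := by
    simpa [List.rtake] using hin.trans_le (hmono (show k + 1 ≤ w.length by omega))
  have hcreated : (Finset.range w.length).filter
      (fun j => ¬ c < (shapeOf (egP (w.rtake j))).getD r 0) = Finset.range (k + 1) := by
    ext j
    simp only [Finset.mem_filter, Finset.mem_range, not_lt]
    constructor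
    · rintro ⟨-, hj⟩
      by_contra! hkj
      exact (hin.trans_le (hmono hkj)).not_ge hj
    · intro hj
      exact ⟨by omega, (hmono (Nat.lt_succ_iff.1 hj)).trans (not_lt.1 hout)⟩
  simp only [egQfun, if_pos hfull]
  exact (congrArg Finset.card hcreated).trans (Finset.card_range _)

/-- The first `c` columns of the rows `Rs`, with the entries of `vs` filling column `c` of the top
`vs.length` rows. -/
def partialTableau : List (List ℕ) → ℕ → List ℕ → List (List ℕ)
  | [], _, _ => []
  | R :: Rs, c, [] => if c = 0 then [] else R.take c :: partialTableau Rs c []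
  | R :: Rs, c, v :: vs => (R.take c ++ [v]) :: partialTableau Rs c vs

@[simp]
lemma partialTableau_zero_nil (Rs : List (List ℕ)) : partialTableau Rs 0 [] = [] := by
  cases Rs <;> simp [partialTableau]

lemma partialTableau_cons_nil (R : List ℕ) (Rs : List (List ℕ)) {c : ℕ} (hc : c ≠ 0) :
    partialTableau (R :: Rs) c [] = R.take c :: partialTableau Rs c [] := by
  simp [partialTableau, hc]

lemma egInsert_partialTableau {c : ℕ} {Rs : List (List ℕ)} {x : ℕ} {vs : List ℕ}
    (hsorted : (x :: vs).Pairwise (· < ·)) (hlen : vs.length < Rs.length)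
    (hdom : ∀ i < (x :: vs).length, ∀ y ∈ (Rs.getD i []).take c, y < (x :: vs).getD i 0) :
    egInsert x (partialTableau Rs c vs) = partialTableau Rs c (x :: vs) := by
  induction Rs generalizing x vs with
  | nil => simp at hlen
  | cons R Rs ih =>
    have hx : ∀ y ∈ R.take c, y < x := by simpa using hdom 0 (by simp)
    cases vs with
    | nil =>
      rcases eq_or_ne c 0 with rfl | hc
      · simp [egInsert, partialTableau]
      · rw [partialTableau_cons_nil R Rs hc]
        simp [egInsert, rowIns_of_forall_le fun y hy => (hx y hy).le, partialTableau]
    | cons v vs =>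
      have hxv : x < v := List.rel_of_pairwise_cons hsorted (by simp)
      have hrest : egInsert v (partialTableau Rs c vs) = partialTableau Rs c (v :: vs) :=
        ih hsorted.of_cons (by simpa using hlen) fun i hi => by
          simpa using hdom (i + 1) (by simpa using hi)
      simp [egInsert, partialTableau, rowIns_append_singleton hx hxv, hrest]

lemma lt_shapeOf_partialTableau_iff {Rs : List (List ℕ)} {c i : ℕ} {vs : List ℕ}
    (hvs : vs.length ≤ Rs.length) (hi : c ≤ (Rs.getD i []).length) :
    c < (shapeOf (partialTableau Rs c vs)).getD i 0 ↔ i < vs.length := by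
  induction Rs generalizing vs i with
  | nil => simp_all [partialTableau, shapeOf]
  | cons R Rs ih =>
    rcases vs with _ | ⟨v, vs⟩
    · rcases eq_or_ne c 0 with rfl | hc
      · simp [shapeOf]
      · rw [partialTableau_cons_nil R Rs hc]
        cases i with
        | zero => simp [shapeOf]
        | succ i => simpa [shapeOf] using ih (vs := []) (by simp) (by simpa using hi)
    · cases i with
      | zero => simp_all [partialTableau, shapeOf]
      | succ i =>
        simpa [partialTableau, shapeOf] using ih (vs := vs) (by simpa using hvs)
          (by simpa using hi)

lemma partialTableau_eq_self {Rs : List (List ℕ)} {m : ℕ} (h : ∀ R ∈ Rs, R ≠ [] ∧ R.length ≤ m) :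
    partialTableau Rs m [] = Rs := by
  induction Rs with
  | nil => rfl
  | cons R Rs ih =>
    obtain ⟨hne, hle⟩ := h R (by simp)
    have hm : m ≠ 0 := by rintro rfl; exact hne (List.length_eq_zero_iff.1 (by omega))
    rw [partialTableau_cons_nil R Rs hm, List.take_of_length_le hle,
      ih fun R' hR' => h R' (by simp [hR'])]

def column (T : List (List ℕ)) (c : ℕ) : List ℕ := T.filterMap (·[c]?)

lemma length_column_le (T : List (List ℕ)) (c : ℕ) : (column T c).length ≤ T.length :=
  List.length_filterMap_le _ _

lemma column_cons_of_lt {R : List ℕ} {c : ℕ} (T : List (List ℕ)) (hc : c < R.length) :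
    column (R :: T) c = R[c] :: column T c :=
  List.filterMap_cons_some (List.getElem?_eq_getElem hc)

lemma column_eq_nil {T : List (List ℕ)} {c : ℕ} (h : ∀ R ∈ T, R.length ≤ c) : column T c = [] :=
  List.filterMap_eq_nil_iff.2 fun R hR => List.getElem?_eq_none (h R hR)

lemma length_le_of_pairwise_cons {R : List ℕ} {T : List (List ℕ)} {c : ℕ}
    (hlen : ((R :: T).map List.length).Pairwise (· ≥ ·)) (hc : R.length ≤ c) :
    ∀ R' ∈ R :: T, R'.length ≤ c := by
  simp only [List.map_cons, List.pairwise_cons, List.mem_map] at hlen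
  intro R' hR'
  rcases List.mem_cons.1 hR' with rfl | hR'
  · exact hc
  · exact (hlen.1 _ ⟨_, hR', rfl⟩).trans hc

section Column

variable {T : List (List ℕ)} (hlen : (T.map List.length).Pairwise (· ≥ ·))
include hlen

lemma lt_length_column_iff {c j : ℕ} : j < (column T c).length ↔ c < (T.getD j []).length := by
  induction T generalizing j with
  | nil => simp [column]
  | cons R T ih =>
    by_cases hc : c < R.length
    · cases j <;> simp [column_cons_of_lt T hc, hc, ih (List.pairwise_cons.1 hlen).2]
    · have hshort := length_le_of_pairwise_cons hlen (not_lt.1 hc)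
      simp only [column_eq_nil hshort, List.length_nil, Nat.not_lt_zero, false_iff, not_lt]
      rcases lt_or_ge j (R :: T).length with hj | hj
      · exact List.getD_eq_getElem _ _ hj ▸ hshort _ (List.getElem_mem hj)
      · rw [List.getD_eq_default _ _ hj]; exact Nat.zero_le c

lemma getD_column {c j : ℕ} (hj : j < (column T c).length) :
    (column T c).getD j 0 = (T.getD j []).getD c 0 := by
  induction T generalizing j with
  | nil => simp [column] at hj
  | cons R T ih =>
    have hc : c < R.length := (lt_length_column_iff hlen).1 (Nat.zero_lt_of_lt hj)
    rw [column_cons_of_lt T hc] at hj ⊢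
    cases j with
    | zero => rw [List.getD_cons_zero, List.getD_cons_zero, List.getD_eq_getElem _ _ hc]
    | succ j => simpa using ih (List.pairwise_cons.1 hlen).2 (by simpa using hj)

lemma partialTableau_column (hne : ∀ R ∈ T, R ≠ []) (c : ℕ) :
    partialTableau T c (column T c) = partialTableau T (c + 1) [] := by
  induction T with
  | nil => rfl
  | cons R T ih =>
    have ih := ih (List.pairwise_cons.1 hlen).2 fun R' hR' => hne R' (by simp [hR'])
    rw [partialTableau_cons_nil R T (Nat.succ_ne_zero c)]
    by_cases hc : c < R.length
    · rw [column_cons_of_lt T hc, partialTableau, ih, List.take_add_one,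
        List.getElem?_eq_getElem hc]
      rfl
    · have hshort := length_le_of_pairwise_cons hlen (not_lt.1 hc)
      have hc0 : c ≠ 0 := by
        rintro rfl; exact hne R (by simp) (List.length_eq_zero_iff.1 (by omega))
      rw [column_eq_nil hshort, partialTableau_cons_nil R T hc0,
        List.take_of_length_le (not_lt.1 hc), List.take_of_length_le (by omega), ← ih,
        column_eq_nil fun R' hR' => hshort R' (List.mem_cons_of_mem R hR')]

lemma pairwise_column
    (hcol : ∀ r c : ℕ, r + 1 < T.length → c < (T.getD (r + 1) []).length →
      (T.getD r []).getD c 0 < (T.getD (r + 1) []).getD c 0) (c : ℕ) :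
    (column T c).Pairwise (· < ·) := by
  refine List.IsChain.pairwise (List.isChain_iff_getElem.2 fun j hj => ?_)
  have hTj : c < (T.getD (j + 1) []).length := (lt_length_column_iff hlen).1 hj
  rw [← List.getD_eq_getElem (d := 0), ← List.getD_eq_getElem (d := 0),
    getD_column hlen hj, getD_column hlen (by omega)]
  exact hcol j c (lt_length_of_lt_length_getD hTj) hTj

end Column

def colWordUpTo (T : List (List ℕ)) (c : ℕ) : List ℕ :=
  ((List.range c).reverse).flatMap (column T)

lemma colWord_eq_colWordUpTo (T : List (List ℕ)) :
    colWord T = colWordUpTo T ((T.map List.length).foldr max 0) := rfl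

lemma colWordUpTo_succ (T : List (List ℕ)) (c : ℕ) :
    colWordUpTo T (c + 1) = column T c ++ colWordUpTo T c := by
  simp [colWordUpTo, List.range_succ]

lemma colWordUpTo_suffix_of_le (T : List (List ℕ)) {a b : ℕ} (hab : a ≤ b) :
    colWordUpTo T a <:+ colWordUpTo T b := by
  induction b, hab using Nat.le_induction with
  | base => exact List.suffix_refl _
  | succ b _ ih => exact ih.trans (colWordUpTo_succ T b ▸ List.suffix_append _ _)

lemma column_append_colWordUpTo_suffix {T : List (List ℕ)} {c : ℕ}
    (hc : c < (T.map List.length).foldr max 0) : column T c ++ colWordUpTo T c <:+ colWord T :=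
  colWordUpTo_succ T c ▸ colWordUpTo_suffix_of_le T hc

section ColumnWord

variable {T : List (List ℕ)} (hrows : ∀ R ∈ T, R ≠ [] ∧ List.Pairwise (· < ·) R)
  (hlen : (T.map List.length).Pairwise (· ≥ ·))
  (hcol : ∀ r c : ℕ, r + 1 < T.length → c < (T.getD (r + 1) []).length →
    (T.getD r []).getD c 0 < (T.getD (r + 1) []).getD c 0)
include hrows hlen hcol

lemma foldr_egInsert_partialTableau {c : ℕ} {vs : List ℕ} (hvs : vs <:+ column T c) :
    vs.foldr egInsert (partialTableau T c []) = partialTableau T c vs := by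
  induction vs with
  | nil => rfl
  | cons x vs ih =>
    have hsorted := (pairwise_column hlen hcol c).sublist hvs.sublist
    obtain ⟨U, hU⟩ := hvs
    have hlenT : vs.length < T.length := by
      have h1 := congrArg List.length hU
      have h2 := length_column_le T c
      simp only [List.length_append, List.length_cons] at h1
      omega
    rw [List.foldr_cons, ih ((List.suffix_cons x vs).trans ⟨U, hU⟩)]
    refine egInsert_partialTableau hsorted hlenT fun i hi y hy => ?_
    have hiU : U.length + i < (column T c).length := by rw [← hU]; simpa using hi
    have hci : c < (T.getD i []).length := (lt_length_column_iff hlen).1 (by omega)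
    have hrow := (hrows _ (getD_mem_of_lt_length_getD hci)).2
    calc y < (T.getD i []).getD c 0 := lt_getD_of_mem_take hrow hci hy
      _ = (column T c).getD i 0 := (getD_column hlen (by omega)).symm
      _ ≤ (column T c).getD (U.length + i) 0 :=
        getD_le_getD_of_pairwise (pairwise_column hlen hcol c) (by omega) hiU
      _ = (x :: vs).getD i 0 := by rw [← hU, List.getD_append_right _ _ _ _ (by omega)]; simp

lemma egP_colWordUpTo (c : ℕ) : egP (colWordUpTo T c) = partialTableau T c [] := by
  induction c with
  | zero => simp [colWordUpTo, egP]
  | succ c ih =>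
    rw [colWordUpTo_succ, egP_append, ih,
      foldr_egInsert_partialTableau hrows hlen hcol (List.suffix_refl _),
      partialTableau_column hlen (fun R hR => (hrows R hR).1)]

lemma egP_colWord : egP (colWord T) = T := by
  rw [colWord_eq_colWordUpTo, egP_colWordUpTo hrows hlen hcol]
  exact partialTableau_eq_self fun R hR =>
    ⟨(hrows R hR).1, List.le_max_of_le' 0 (List.mem_map_of_mem hR) le_rfl⟩

lemma egP_rtake_colWord {c r : ℕ} (hc : c < (T.map List.length).foldr max 0)
    (hr : r ≤ (column T c).length) :
    egP ((colWord T).rtake ((colWordUpTo T c).length + r))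
      = partialTableau T c ((column T c).rtake r) := by
  rw [(column_append_colWordUpTo_suffix hc).rtake_eq (by simp; omega), add_comm,
    List.rtake_append_of_le hr, egP_append, egP_colWordUpTo hrows hlen hcol]
  exact foldr_egInsert_partialTableau hrows hlen hcol (List.drop_suffix _ _)

lemma egQfun_colWord {c i : ℕ} (hi : i < (column T c).length) :
    egQfun (colWord T) (i, c) = (colWordUpTo T c).length + i + 1 := by
  have hci : c < (T.getD i []).length := (lt_length_column_iff hlen).1 hi
  have hc : c < (T.map List.length).foldr max 0 :=
    List.le_max_of_le' 0 (List.mem_map_of_mem (getD_mem_of_lt_length_getD hci)) hci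
  have hshape (r : ℕ) (hr : r ≤ (column T c).length) :
      c < (shapeOf (egP ((colWord T).rtake ((colWordUpTo T c).length + r)))).getD i 0 ↔ i < r := by
    have hlen_rtake : ((column T c).rtake r).length = r := by simp [List.rtake]; omega
    rw [egP_rtake_colWord hrows hlen hcol hc hr, lt_shapeOf_partialTableau_iff _ hci.le,
      hlen_rtake]
    rw [hlen_rtake]; exact hr.trans (length_column_le T c)
  have hword := (column_append_colWordUpTo_suffix hc).length_le
  rw [List.length_append] at hword
  exact egQfun_eq_succ (by omega) (fun h => (hshape i hi.le).1 h |>.false)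
    ((hshape (i + 1) hi).2 (Nat.lt_succ_self i))

end ColumnWord

theorem eg_of_column_word_general (T : List (List ℕ))
    (hrows : ∀ R ∈ T, R ≠ [] ∧ List.Pairwise (· < ·) R)
    (hshape : ∀ r : ℕ, r + 1 < T.length →
      (T.getD (r + 1) []).length ≤ (T.getD r []).length)
    (hcol : ∀ r c : ℕ, r + 1 < T.length → c < (T.getD (r + 1) []).length →
      (T.getD r []).getD c 0 < (T.getD (r + 1) []).getD c 0) :
    egP (colWord T) = T ∧
    (∀ r c : ℕ, r + 1 < T.length → c < (T.getD (r + 1) []).length →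
      egQfun (colWord T) (r + 1, c) = egQfun (colWord T) (r, c) + 1) := by
  have hlen : (T.map List.length).Pairwise (· ≥ ·) :=
    List.IsChain.pairwise <| List.isChain_iff_getElem.2 fun r hr => by
      have hr' : r + 1 < T.length := by simpa using hr
      have h := hshape r hr'
      rw [List.getD_eq_getElem _ _ hr', List.getD_eq_getElem _ _ (Nat.lt_of_succ_lt hr')] at h
      simpa using h
  refine ⟨egP_colWord hrows hlen hcol, fun r c _ hc => ?_⟩
  have hr : r + 1 < (column T c).length := (lt_length_column_iff hlen).2 hc
  rw [egQfun_colWord hrows hlen hcol hr, egQfun_colWord hrows hlen hcol (by omega),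
    Nat.add_assoc _ r]

/-- If `T` is a row-and-column strict tableau whose column reading word `τ(T)` is reduced,
then Edelman–Greene insertion recovers `T`: `P(τ(T)) = T`, and each column of the recording
tableau `Q(τ(T))` consists of consecutive integers. -/
theorem eg_of_column_word (T : List (List ℕ))
    (hrows : ∀ R ∈ T, R ≠ [] ∧ List.Pairwise (· < ·) R)
    (hshape : ∀ r : ℕ, r + 1 < T.length →
      (T.getD (r + 1) []).length ≤ (T.getD r []).length)
    (hcol : ∀ r c : ℕ, r + 1 < T.length → c < (T.getD (r + 1) []).length →
      (T.getD r []).getD c 0 < (T.getD (r + 1) []).getD c 0)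
    (hred : IsReducedWord (colWord T)) :
    egP (colWord T) = T ∧
    (∀ r c : ℕ, r + 1 < T.length → c < (T.getD (r + 1) []).length →
      egQfun (colWord T) (r + 1, c) = egQfun (colWord T) (r, c) + 1) :=
  eg_of_column_word_general T hrows hshape hcol
end

section
/- Let w be a reduced word and α a Coxeter-Knuth move of type three (x(x+1)x ↔ (x+1)x(x+1)) applied at positions i−1, i, i+1. If during the Edelman-Greene insertion of the triple into a row, the letter x bumps the entry x+1 and the entry following x+1 in that row is forced to be x+2, then the triples passed to the next row are (x+1)(x+2)(x+1) and (x+2)(x+1)(x+2) respectively — i.e., the bumped triples again differ by a Coxeter-Knuth move of type three. -/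
/-!
Write the row as `A ++ (x+1) :: (x+2) :: B` with every entry of `A` at most `x`. Inserting `x+1`
is always a special bump (it already sits right before `x+2`), so it fixes the row. Inserting `x`
is a special bump exactly when `A` ends in `x`; then both letters fix the row and the bumped
triples can be read off. Otherwise `x` replaces `x+1`, the following `x+1` replaces `x+2`, and
the last `x` is a special bump; in the other order `x+1` fixes the row and then the argument
just given applies to the remaining pair.
-/

namespace List

variable {α : Type*}

theorem findIdx_append_cons {p : α → Bool} {A B : List α} {c : α}
    (hA : ∀ a ∈ A, p a = false) (hc : p c) : (A ++ c :: B).findIdx p = A.length := by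
  simp [findIdx_append, findIdx_eq_length_of_false hA, findIdx_cons, hc]

theorem exists_eq_append_cons_cons_of_findIdx {p : α → Bool} {l : List α} {d b c : α}
    (hlen : l.findIdx p + 1 < l.length) (hb : l.getD (l.findIdx p) d = b)
    (hc : l.getD (l.findIdx p + 1) d = c) :
    ∃ A B, l = A ++ b :: c :: B ∧ ∀ a ∈ A, p a = false := by
  set j := l.findIdx p
  refine ⟨l.take j, l.drop (j + 2), ?_, fun a ha => ?_⟩
  · rw [getD_eq_getElem _ _ (by omega)] at hb
    rw [getD_eq_getElem _ _ hlen] at hc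
    conv_lhs => rw [← take_append_drop j l, drop_eq_getElem_cons (by omega), hb,
      drop_eq_getElem_cons hlen, hc]
  · obtain ⟨i, hi, rfl⟩ := getElem_of_mem ha
    rw [getElem_take]
    exact not_of_lt_findIdx (by simp at hi; omega)

end List

theorem rowIns_append_cons {x c : ℕ} {A : List ℕ} (B : List ℕ) (hA : ∀ a ∈ A, a ≤ x)
    (hc : x < c) :
    rowIns x (A ++ c :: B) =
      if c = x + 1 ∧ A.getLast? = some x then (A ++ c :: B, some c)
      else (A ++ x :: B, some c) := by
  have hj : (A ++ c :: B).findIdx (fun y => decide (x < y)) = A.length :=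
    List.findIdx_append_cons (by simpa using hA) (by simpa using hc)
  have hnotAll : (A ++ c :: B).all (fun y => decide (y ≤ x)) = false := by
    simp only [List.all_eq_false]
    exact ⟨c, by simp, by simpa using hc⟩
  have hprev : (0 < A.length ∧ (A ++ c :: B).getD (A.length - 1) 0 = x) ↔
      A.getLast? = some x := by
    rcases A.eq_nil_or_concat' with rfl | ⟨A', a, rfl⟩
    · simp
    · simp [List.getD_eq_getElem?_getD]
  have hbumped : (A ++ c :: B).getD A.length 0 = c := by simp [List.getD_eq_getElem?_getD]
  simp only [rowIns, hnotAll, hj, hbumped, hprev, Bool.false_eq_true, if_false]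
  split_ifs with h
  · rw [h.1]
  · simp

theorem rowIns_special {x : ℕ} {A : List ℕ} (B : List ℕ) (hA : ∀ a ∈ A, a ≤ x) :
    rowIns x (A ++ x :: (x + 1) :: B) = (A ++ x :: (x + 1) :: B, some (x + 1)) := by
  have hAx : ∀ a ∈ A ++ [x], a ≤ x := List.forall_mem_append.2 ⟨hA, by simp⟩
  simpa using rowIns_append_cons B hAx (lt_add_one x)

theorem rowIns_of_getLast?_ne {x c : ℕ} {A : List ℕ} (B : List ℕ) (hA : ∀ a ∈ A, a ≤ x)
    (hc : x < c) (hlast : A.getLast? ≠ some x) :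
    rowIns x (A ++ c :: B) = (A ++ x :: B, some c) := by
  simp [rowIns_append_cons B hA hc, hlast]

theorem type_three_propagates_general (x : ℕ) (R : List ℕ)
    (hlen : R.findIdx (fun y => decide (x < y)) + 1 < R.length)
    (hbump : R.getD (R.findIdx (fun y => decide (x < y))) 0 = x + 1)
    (hnext : R.getD (R.findIdx (fun y => decide (x < y)) + 1) 0 = x + 2) :
    ((rowIns x R).2 = some (x + 1) ∧
     (rowIns (x + 1) (rowIns x R).1).2 = some (x + 2) ∧
     (rowIns x (rowIns (x + 1) (rowIns x R).1).1).2 = some (x + 1)) ∧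
    ((rowIns (x + 1) R).2 = some (x + 2) ∧
     (rowIns x (rowIns (x + 1) R).1).2 = some (x + 1) ∧
     (rowIns (x + 1) (rowIns x (rowIns (x + 1) R).1).1).2 = some (x + 2)) := by
  obtain ⟨A, B, rfl, hA⟩ := List.exists_eq_append_cons_cons_of_findIdx hlen hbump hnext
  replace hA : ∀ a ∈ A, a ≤ x := by simpa using hA
  have hsucc := rowIns_special (x := x + 1) B fun a ha => (hA a ha).trans (Nat.le_succ x)
  by_cases hlast : A.getLast? = some x
  · have hfixed : rowIns x (A ++ (x + 1) :: (x + 2) :: B) =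
        (A ++ (x + 1) :: (x + 2) :: B, some (x + 1)) := by
      simpa [hlast] using rowIns_append_cons ((x + 2) :: B) hA (lt_add_one x)
    simp [hfixed, hsucc]
  · have hfirst := rowIns_of_getLast?_ne ((x + 2) :: B) hA (lt_add_one x) hlast
    have hsecond : rowIns (x + 1) (A ++ x :: (x + 2) :: B) =
        (A ++ x :: (x + 1) :: B, some (x + 2)) := by
      have hAx : ∀ a ∈ A ++ [x], a ≤ x + 1 :=
        List.forall_mem_append.2 ⟨fun a ha => (hA a ha).trans (Nat.le_succ x), by simp⟩
      simpa using rowIns_of_getLast?_ne B hAx (c := x + 2) (by omega) (by simp)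
    simp [hfirst, hsecond, rowIns_special B hA, hsucc]

/-- Propagation of a type-three Coxeter–Knuth pattern through one row of Edelman–Greene
insertion.  Suppose `R` is a strictly increasing row, `x` bumps the entry `x+1` of `R`
(that is, the first entry of `R` exceeding `x` is `x+1`), and the entry following that
`x+1` is `x+2`.  Then inserting `x, x+1, x` successively into `R` bumps the triple
`x+1, x+2, x+1` to the next row, while inserting `x+1, x, x+1` successively into `R`
bumps the triple `x+2, x+1, x+2`: the bumped triples again differ by a Coxeter–Knuth
move of type three. -/
theorem type_three_propagates (x : ℕ) (R : List ℕ)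
    (hs : List.Pairwise (· < ·) R)
    (hlen : R.findIdx (fun y => decide (x < y)) + 1 < R.length)
    (hbump : R.getD (R.findIdx (fun y => decide (x < y))) 0 = x + 1)
    (hnext : R.getD (R.findIdx (fun y => decide (x < y)) + 1) 0 = x + 2) :
    ((rowIns x R).2 = some (x + 1) ∧
     (rowIns (x + 1) (rowIns x R).1).2 = some (x + 2) ∧
     (rowIns x (rowIns (x + 1) (rowIns x R).1).1).2 = some (x + 1)) ∧
    ((rowIns (x + 1) R).2 = some (x + 2) ∧
     (rowIns x (rowIns (x + 1) R).1).2 = some (x + 1) ∧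
     (rowIns (x + 1) (rowIns x (rowIns (x + 1) R).1).1).2 = some (x + 2)) :=
  type_three_propagates_general x R hlen hbump hnext
end
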